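/- arXiv:1610.06094 — 8 statements merged into one kernel-verified Lean document; each statement's English description precedes it below -/
import Mathlib

section
/- If a graph G with integer edge weights is Hadamard diagonalizable, then every eigenvalue of its Laplacian matrix L is an even integer. -/
/-!
Since `Hᵀ H = n I`, the identity `L = (1/n) H Λ Hᵀ` says `L H = H Λ`, so the `k`-th column `h` of `H`
is a `±1` eigenvector of `L` for `Λ k`; and `Hᵀ L = Λ Hᵀ`, so every eigenvalue of `L` is some `Λ k`.
Reading `L h = Λ k • h` at a row `i` gives `Λ k = h i * ∑ j, L i j * h j`, an integer congruent
modulo 2 to the row sum `∑ j, L i j = 0`.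
-/

open Matrix

section Hadamard

variable {ι K : Type*} [Fintype ι] [DecidableEq ι] [Field K]

theorem Matrix.transpose_mul_self_eq_smul_one {H : Matrix ι ι K} {c : K} (hc : c ≠ 0)
    (hH : H * Hᵀ = c • 1) : Hᵀ * H = c • 1 := by
  have hinv : H * (c⁻¹ • Hᵀ) = 1 := by
    rw [Matrix.mul_smul, hH, smul_smul, inv_mul_cancel₀ hc, one_smul]
  rw [← one_smul K (Hᵀ * H), ← mul_inv_cancel₀ hc, mul_smul, ← Matrix.smul_mul,
    mul_eq_one_comm.mp hinv]

variable {H M : Matrix ι ι K} {c : K} {Λ : ι → K}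

theorem Matrix.mul_eq_mul_diagonal_of_eq_inv_smul (hc : c ≠ 0) (hHH : Hᵀ * H = c • 1)
    (hM : M = c⁻¹ • (H * diagonal Λ * Hᵀ)) : M * H = H * diagonal Λ := by
  rw [hM, Matrix.smul_mul, Matrix.mul_assoc, hHH, Matrix.mul_smul, Matrix.mul_one, smul_smul,
    inv_mul_cancel₀ hc, one_smul]

theorem Matrix.transpose_mul_eq_diagonal_mul_of_eq_inv_smul (hc : c ≠ 0) (hHH : Hᵀ * H = c • 1)
    (hM : M = c⁻¹ • (H * diagonal Λ * Hᵀ)) : Hᵀ * M = diagonal Λ * Hᵀ := by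
  rw [hM, Matrix.mul_smul, ← Matrix.mul_assoc, ← Matrix.mul_assoc, hHH, Matrix.smul_mul,
    Matrix.smul_mul,
    Matrix.one_mul, smul_smul, inv_mul_cancel₀ hc, one_smul]

end Hadamard

section Eigen

variable {ι κ R : Type*} [Fintype ι] [Fintype κ] [DecidableEq κ] [CommRing R]

theorem Matrix.mulVec_col_eq_smul_of_mul_eq_mul_diagonal {M : Matrix ι ι R} {P : Matrix ι κ R}
    {Λ : κ → R} (h : M * P = P * diagonal Λ) (k : κ) : M *ᵥ P.col k = Λ k • P.col k := by
  ext i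
  have hik := congrFun (congrFun h i) k
  rw [mul_diagonal, mul_apply] at hik
  simpa [mulVec, dotProduct, mul_comm] using hik

theorem Matrix.exists_eq_of_mul_eq_diagonal_mul [IsDomain R] {M : Matrix ι ι R}
    {P : Matrix κ ι R} {Λ : κ → R} (h : P * M = diagonal Λ * P) {v : ι → R} {μ : R}
    (hv : M *ᵥ v = μ • v) (hPv : P *ᵥ v ≠ 0) : ∃ k, μ = Λ k := by
  obtain ⟨k, hk⟩ := Function.ne_iff.mp hPv
  have hdiag : diagonal Λ *ᵥ (P *ᵥ v) = μ • (P *ᵥ v) := by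
    rw [mulVec_mulVec, ← h, ← mulVec_mulVec, hv, mulVec_smul]
  have hk' : Λ k * (P *ᵥ v) k = μ * (P *ᵥ v) k := by
    simpa [mulVec_diagonal] using congrFun hdiag k
  exact ⟨k, (mul_right_cancel₀ hk hk').symm⟩

end Eigen

section Parity

variable {ι : Type*} [Fintype ι]

theorem Matrix.sum_diagonal_rowSum_sub_apply_eq_zero {R : Type*} [DecidableEq ι] [AddCommGroup R]
    (A : Matrix ι ι R) (i : ι) : ∑ j, (diagonal (fun i => ∑ j, A i j) - A) i j = 0 := by
  simp [sub_apply, Finset.sum_sub_distrib, diagonal_apply]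

theorem Matrix.even_mulVec_apply_iff_of_odd (L : Matrix ι ι ℤ) {s : ι → ℤ} (hs : ∀ j, Odd (s j))
    (i : ι) : Even ((L *ᵥ s) i) ↔ Even (∑ j, L i j) := by
  have hdiff : (L *ᵥ s) i - ∑ j, L i j = ∑ j, L i j * (s j - 1) := by
    simp only [mulVec, dotProduct, mul_sub, mul_one, Finset.sum_sub_distrib]
  rw [← Int.even_sub, hdiff]
  exact Finset.even_sum _ fun j _ => ((hs j).sub_odd odd_one).mul_left _

theorem Matrix.exists_eq_two_mul_of_mulVec_eq_smul (L : Matrix ι ι ℤ) (i : ι)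
    (hrow : Even (∑ j, L i j)) {x : ι → ℝ} (hx : ∀ j, x j = 1 ∨ x j = -1) {μ : ℝ}
    (hLx : L.map (Int.cast : ℤ → ℝ) *ᵥ x = μ • x) : ∃ m : ℤ, μ = 2 * m := by
  have hlift : ∀ j, ∃ z : ℤ, Odd z ∧ (z : ℝ) = x j := fun j => by
    rcases hx j with h | h
    · exact ⟨1, odd_one, by rw [h, Int.cast_one]⟩
    · exact ⟨-1, odd_neg_one, by rw [h, Int.cast_neg, Int.cast_one]⟩
  choose s hs_odd hs using hlift
  have hx_sq : x i * x i = 1 := by rcases hx i with h | h <;> rw [h] <;> norm_num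
  have hLs : (((L *ᵥ s) i : ℤ) : ℝ) = μ * x i := by
    rw [← smul_eq_mul, ← Pi.smul_apply, ← hLx]
    simp [mulVec, dotProduct, hs]
  obtain ⟨r, hr⟩ := ((L.even_mulVec_apply_iff_of_odd hs_odd i).mpr hrow).mul_left (s i)
  refine ⟨r, ?_⟩
  calc μ = x i * (μ * x i) := by rw [mul_left_comm, hx_sq, mul_one]
    _ = ((s i * (L *ᵥ s) i : ℤ) : ℝ) := by rw [Int.cast_mul, hs, hLs]
    _ = 2 * r := by rw [hr]; push_cast; ring

end Parity

theorem hadamard_diag_eigenvalues_even_general (n : ℕ)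
    (A : Matrix (Fin n) (Fin n) ℤ)
    (L : Matrix (Fin n) (Fin n) ℤ)
    (hL : L = Matrix.diagonal (fun i => ∑ j, A i j) - A)
    (H : Matrix (Fin n) (Fin n) ℝ)
    (hent : ∀ i j, H i j = 1 ∨ H i j = -1)
    (hH : H * Hᵀ = (n : ℝ) • 1)
    (Λ : Fin n → ℝ)
    (hdiag : L.map (fun x => (x : ℝ)) = ((n : ℝ))⁻¹ • (H * Matrix.diagonal Λ * Hᵀ)) :
    ∀ (μ : ℝ) (v : Fin n → ℝ), v ≠ 0 →
      (L.map (fun x => (x : ℝ))) *ᵥ v = μ • v → ∃ m : ℤ, μ = 2 * m := by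
  intro μ v hv hev
  have hn : (n : ℝ) ≠ 0 := by
    rintro hn
    obtain rfl : n = 0 := by exact_mod_cast hn
    exact hv (Subsingleton.elim _ _)
  have hHH := transpose_mul_self_eq_smul_one hn hH
  have hHv : Hᵀ *ᵥ v ≠ 0 := fun h0 => hv <| by
    simpa [mulVec_mulVec, hH, smul_mulVec, hn] using congrArg (H *ᵥ ·) h0
  obtain ⟨k, rfl⟩ := exists_eq_of_mul_eq_diagonal_mul
    (transpose_mul_eq_diagonal_mul_of_eq_inv_smul hn hHH hdiag) hev hHv
  refine L.exists_eq_two_mul_of_mulVec_eq_smul k ?_ (fun j => hent j k)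
    (mulVec_col_eq_smul_of_mul_eq_mul_diagonal (mul_eq_mul_diagonal_of_eq_inv_smul hn hHH hdiag) k)
  rw [hL, sum_diagonal_rowSum_sub_apply_eq_zero]
  exact Even.zero

theorem hadamard_diag_eigenvalues_even (n : ℕ)
    (A : Matrix (Fin n) (Fin n) ℤ) (hAsymm : A.IsSymm) (hAdiag : ∀ i, A i i = 0)
    (L : Matrix (Fin n) (Fin n) ℤ)
    (hL : L = Matrix.diagonal (fun i => ∑ j, A i j) - A)
    (H : Matrix (Fin n) (Fin n) ℝ)
    (hent : ∀ i j, H i j = 1 ∨ H i j = -1)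
    (hH : H * Hᵀ = (n : ℝ) • 1)
    (Λ : Fin n → ℝ)
    (hdiag : L.map (fun x => (x : ℝ)) = ((n : ℝ))⁻¹ • (H * Matrix.diagonal Λ * Hᵀ)) :
    ∀ (μ : ℝ) (v : Fin n → ℝ), v ≠ 0 →
      (L.map (fun x => (x : ℝ))) *ᵥ v = μ • v → ∃ m : ℤ, μ = 2 * m :=
  hadamard_diag_eigenvalues_even_general n A L hL H hent hH Λ hdiag
end

section
/- If a graph G with integer edge weights is Hadamard diagonalizable, then G is regular: all diagonal entries of its Laplacian L are equal, and each equals (1/n) times the sum of the eigenvalues of L. -/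
open Matrix

theorem Matrix.mul_diagonal_mul_transpose_apply_self_of_sign {m ι R : Type*}
    [Fintype ι] [DecidableEq ι] [CommRing R] (H : Matrix m ι R) (d : ι → R) (j : m)
    (hsign : ∀ i, H j i = 1 ∨ H j i = -1) :
    (H * diagonal d * Hᵀ) j j = ∑ i, d i := by
  rw [mul_apply]
  refine Finset.sum_congr rfl fun i _ => ?_
  rw [mul_diagonal, transpose_apply]
  rcases hsign i with h | h <;> rw [h] <;> ring

theorem hadamard_diag_regular_general (n : ℕ)
    (L : Matrix (Fin n) (Fin n) ℤ)
    (H : Matrix (Fin n) (Fin n) ℝ)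
    (hent : ∀ i j, H i j = 1 ∨ H i j = -1)
    (Λ : Fin n → ℝ)
    (hdiag : L.map (fun x => (x : ℝ)) = ((n : ℝ))⁻¹ • (H * Matrix.diagonal Λ * Hᵀ)) :
    (∀ j k : Fin n, L j j = L k k) ∧
    (∀ j : Fin n, ((L j j : ℤ) : ℝ) = ((n : ℝ))⁻¹ * ∑ i, Λ i) := by
  have hLdiag (j : Fin n) : ((L j j : ℤ) : ℝ) = ((n : ℝ))⁻¹ * ∑ i, Λ i := by
    have hjj := congrFun₂ hdiag j j
    rwa [map_apply, Matrix.smul_apply, smul_eq_mul,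
      mul_diagonal_mul_transpose_apply_self_of_sign H Λ j (hent j)] at hjj
  exact ⟨fun j k => by exact_mod_cast (hLdiag j).trans (hLdiag k).symm, hLdiag⟩

theorem hadamard_diag_regular (n : ℕ)
    (A : Matrix (Fin n) (Fin n) ℤ) (hAsymm : A.IsSymm) (hAdiag : ∀ i, A i i = 0)
    (L : Matrix (Fin n) (Fin n) ℤ)
    (hL : L = Matrix.diagonal (fun i => ∑ j, A i j) - A)
    (H : Matrix (Fin n) (Fin n) ℝ)
    (hent : ∀ i j, H i j = 1 ∨ H i j = -1)
    (hH : H * Hᵀ = (n : ℝ) • 1)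
    (Λ : Fin n → ℝ)
    (hdiag : L.map (fun x => (x : ℝ)) = ((n : ℝ))⁻¹ • (H * Matrix.diagonal Λ * Hᵀ)) :
    (∀ j k : Fin n, L j j = L k k) ∧
    (∀ j : Fin n, ((L j j : ℤ) : ℝ) = ((n : ℝ))⁻¹ * ∑ i, Λ i) :=
  hadamard_diag_regular_general n L H hent Λ hdiag
end

section
/- With the same setup, if perfect state transfer occurs from vertex j to vertex k at time π/2, then e^{i(π/2)Λ} Hᵀ e_j = Hᵀ e_k; i.e., the phase relating the two eigenvector expansions is exactly 1. -/
/-!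
Conjugation by `H` diagonalises `L`, so the `(j, k)` entry of `exp (i π/2 L)` is the average
`(1/n) ∑ ℓ, exp (i π/2 Λ ℓ) H j ℓ H k ℓ` of `n` complex numbers of modulus one. Perfect state
transfer says this average has modulus one, which forces all its terms to be equal (equality in the
triangle inequality). The term `ℓ = 0` is `1` since `Λ 0 = 0` and the first column of `H` is all
ones, so every term is `1`; multiplying by `H k ℓ = ±1` gives the claim.
-/

open Matrix

/-- Perfect state transfer at time π/2 for a real Hamiltonian `L`. -/
noncomputable def pstHalfPi {m : Type*} [Fintype m] [DecidableEq m]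
    (L : Matrix m m ℝ) (j k : m) : Prop :=
  ‖(NormedSpace.exp ((Complex.I * ((Real.pi / 2 : ℝ) : ℂ)) •
        L.map (fun x => (x : ℂ)))) j k‖ = 1

open scoped InnerProductSpace

theorem eq_of_norm_le_one_of_norm_sum_eq_card {ι E : Type*} [Fintype ι]
    [NormedAddCommGroup E] [InnerProductSpace ℝ E] {x : ι → E} (hx : ∀ i, ‖x i‖ ≤ 1)
    (hsum : ‖∑ i, x i‖ = Fintype.card ι) (i j : ι) : x i = x j := by
  set N : ℝ := (Fintype.card ι : ℝ)
  have hN : N ≠ 0 := by have : Nonempty ι := ⟨i⟩; positivity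
  -- `u` is the unit vector along the sum: the `⟪u, x i⟫ ≤ 1` add up to `N`, so all equal `1`.
  set u : E := N⁻¹ • ∑ i, x i
  have hu : ‖u‖ = 1 := by
    rw [norm_smul, hsum, norm_inv, Real.norm_natCast, inv_mul_cancel₀ hN]
  have hle : ∀ i, ⟪u, x i⟫_ℝ ≤ 1 := fun i =>
    (real_inner_le_norm u (x i)).trans (by rw [hu, one_mul]; exact hx i)
  have hsum_inner : ∑ i, ⟪u, x i⟫_ℝ = ∑ _i : ι, (1 : ℝ) := by
    rw [← inner_sum, real_inner_smul_left, real_inner_self_eq_norm_sq, hsum, Finset.sum_const,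
      Finset.card_univ, nsmul_one, sq, inv_mul_cancel_left₀ hN]
  have hinner : ∀ i, ⟪u, x i⟫_ℝ = 1 := fun i =>
    (Finset.sum_eq_sum_iff_of_le fun i _ => hle i).mp hsum_inner i (Finset.mem_univ i)
  have heq : ∀ i, x i = u := fun i => by
    have : ‖x i - u‖ ^ 2 ≤ 0 := by
      rw [norm_sub_sq_real, real_inner_comm, hinner i, hu]
      nlinarith [hx i, norm_nonneg (x i)]
    exact sub_eq_zero.mp (norm_eq_zero.mp (by nlinarith [norm_nonneg (x i - u)]))
  rw [heq i, heq j]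

theorem Matrix.exp_inv_smul_mul_diagonal_mul {m : Type*} [Fintype m] [DecidableEq m]
    {H V : Matrix m m ℂ} {c : ℂ} (hc : c ≠ 0) (hHV : H * V = c • 1) (d : m → ℂ) :
    NormedSpace.exp (c⁻¹ • (H * diagonal d * V)) =
      c⁻¹ • (H * diagonal (fun ℓ => Complex.exp (d ℓ)) * V) := by
  have hinv : H * (c⁻¹ • V) = 1 := by
    rw [Matrix.mul_smul, hHV, smul_smul, inv_mul_cancel₀ hc, one_smul]
  have hH : H⁻¹ = c⁻¹ • V := Matrix.inv_eq_right_inv hinv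
  have hU : IsUnit H := (isUnit_iff_isUnit_det H).mpr (isUnit_det_of_right_inverse hinv)
  have hconj : ∀ D : Matrix m m ℂ, c⁻¹ • (H * D * V) = H * D * H⁻¹ := fun D => by
    rw [hH, Matrix.mul_smul]
  have hexp : NormedSpace.exp d = fun ℓ => Complex.exp (d ℓ) := by
    funext ℓ; rw [Pi.coe_exp, Complex.exp_eq_exp_ℂ]
  rw [hconj, hconj, Matrix.exp_conj H _ hU, Matrix.exp_diagonal, hexp]

theorem Matrix.exp_smul_inv_smul_conj_diagonal_apply {m : Type*} [Fintype m] [DecidableEq m]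
    (n : ℕ) [NeZero n] {H : Matrix m m ℤ} (hH : H * Hᵀ = (n : ℤ) • 1) (Λ : m → ℝ) (t : ℂ)
    (j k : m) :
    NormedSpace.exp (t • ((n : ℝ)⁻¹ • (H.map (fun x => (x : ℝ)) * diagonal Λ *
      (H.map (fun x => (x : ℝ)))ᵀ)).map (fun x => (x : ℂ))) j k =
      (n : ℂ)⁻¹ * ∑ ℓ, Complex.exp (t * Λ ℓ) * H j ℓ * H k ℓ := by
  set Hc : Matrix m m ℂ := H.map (↑)
  have hHc : Hc * Hcᵀ = (n : ℂ) • 1 := by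
    have := congrArg (Int.castRingHom ℂ).mapMatrix hH
    rwa [map_mul, map_zsmul, map_one, ← Int.cast_smul_eq_zsmul ℂ, Int.cast_natCast] at this
  have hconj : t • ((n : ℝ)⁻¹ • (H.map (fun x => (x : ℝ)) * diagonal Λ *
      (H.map (fun x => (x : ℝ)))ᵀ)).map (fun x => (x : ℂ)) =
      (n : ℂ)⁻¹ • (Hc * diagonal (fun ℓ => t * Λ ℓ) * Hcᵀ) := by
    ext a b
    simp only [smul_apply, map_apply, mul_apply, diagonal_apply, mul_ite, mul_zero,
      Finset.sum_ite_eq', Finset.mem_univ, ↓reduceIte, transpose_apply, smul_eq_mul, Finset.mul_sum,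
      Complex.ofReal_sum, Complex.ofReal_mul, Complex.ofReal_inv, Complex.ofReal_natCast,
      Complex.ofReal_intCast, Hc]
    exact Finset.sum_congr rfl fun _ _ => by ring
  rw [hconj, exp_inv_smul_mul_diagonal_mul (NeZero.ne _) hHc, smul_apply, smul_eq_mul, mul_apply]
  congr 1
  refine Finset.sum_congr rfl fun ℓ _ => ?_
  rw [mul_diagonal, transpose_apply]
  exact congrArg (· * _) (mul_comm _ _)

theorem pst_phase_is_one_general (n : ℕ) [NeZero n]
    (H : Matrix (Fin n) (Fin n) ℤ)
    (hent : ∀ u v, H u v = 1 ∨ H u v = -1)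
    (hH : H * Hᵀ = (n : ℤ) • 1)
    (hcol : ∀ u, H u 0 = 1)
    (Λ : Fin n → ℤ) (hzero : Λ 0 = 0)
    (L : Matrix (Fin n) (Fin n) ℝ)
    (hL : L = ((n : ℝ))⁻¹ •
      ((H.map (fun x => (x : ℝ))) * Matrix.diagonal (fun ℓ => ((Λ ℓ : ℤ) : ℝ)) *
        (H.map (fun x => (x : ℝ)))ᵀ))
    (j k : Fin n)
    (hpst : pstHalfPi L j k) :
    ∀ ℓ : Fin n,
      Complex.exp (Complex.I * ((Real.pi / 2 : ℝ) : ℂ) * ((Λ ℓ : ℤ) : ℂ)) *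
        ((H j ℓ : ℤ) : ℂ) = ((H k ℓ : ℤ) : ℂ) := by
  set t : ℂ := Complex.I * ((Real.pi / 2 : ℝ) : ℂ)
  set z : Fin n → ℂ := fun ℓ => Complex.exp (t * Λ ℓ) * H j ℓ * H k ℓ
  have hsign : ∀ u v, ‖((H u v : ℤ) : ℂ)‖ = 1 := fun u v => by
    rcases hent u v with h | h <;> simp [h]
  have hz : ∀ ℓ, ‖z ℓ‖ ≤ 1 := fun ℓ => by
    rw [norm_mul, norm_mul, hsign, hsign, mul_one, mul_one,
      show t * Λ ℓ = ((Real.pi / 2 * Λ ℓ : ℝ) : ℂ) * Complex.I by simp only [t]; push_cast; ring]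
    exact (Complex.norm_exp_ofReal_mul_I _).le
  have hsum : ‖∑ ℓ, z ℓ‖ = Fintype.card (Fin n) := by
    rw [pstHalfPi, hL, exp_smul_inv_smul_conj_diagonal_apply n hH, norm_mul, norm_inv,
      Complex.norm_natCast, inv_mul_eq_one₀ (Nat.cast_ne_zero.mpr (NeZero.ne n))] at hpst
    simpa [z, t] using hpst.symm
  have hz0 : z 0 = 1 := by simp [z, hzero, hcol]
  intro ℓ
  have hzℓ : z ℓ = 1 := (eq_of_norm_le_one_of_norm_sum_eq_card hz hsum ℓ 0).trans hz0
  have hsq : ((H k ℓ : ℤ) : ℂ) * H k ℓ = 1 := by rcases hent k ℓ with h | h <;> simp [h]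
  linear_combination (H k ℓ : ℂ) * hzℓ - Complex.exp (t * Λ ℓ) * H j ℓ * hsq

theorem pst_phase_is_one (n : ℕ) [NeZero n]
    (H : Matrix (Fin n) (Fin n) ℤ)
    (hent : ∀ u v, H u v = 1 ∨ H u v = -1)
    (hH : H * Hᵀ = (n : ℤ) • 1)
    (hrow : ∀ v, H 0 v = 1) (hcol : ∀ u, H u 0 = 1)
    (Λ : Fin n → ℤ) (heven : ∀ ℓ, Even (Λ ℓ)) (hzero : Λ 0 = 0)
    (L : Matrix (Fin n) (Fin n) ℝ)
    (hL : L = ((n : ℝ))⁻¹ •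
      ((H.map (fun x => (x : ℝ))) * Matrix.diagonal (fun ℓ => ((Λ ℓ : ℤ) : ℝ)) *
        (H.map (fun x => (x : ℝ)))ᵀ))
    (j k : Fin n)
    (hpst : pstHalfPi L j k) :
    ∀ ℓ : Fin n,
      Complex.exp (Complex.I * ((Real.pi / 2 : ℝ) : ℂ) * ((Λ ℓ : ℤ) : ℂ)) *
        ((H j ℓ : ℤ) : ℂ) = ((H k ℓ : ℤ) : ℂ) :=
  pst_phase_is_one_general n H hent hH hcol Λ hzero L hL j k hpst
end

section
/- Suppose A is a symmetric n×n matrix with entries in {0,1} that is diagonalized by the standard Hadamard matrix of order n = 2^k (i.e., H_k⁻¹ A H_k is diagonal). Then A has constant diagonal: all diagonal entries of A are equal. -/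
/-!
Since the entries of `H = stdHadamard k` are `±1` and `H * H = 2ᵏ • 1` (the sum over `w` factors
over the coordinates), `H u w * H⁻¹ w u = 2⁻ᵏ` for all `u, w`. So if `A = H * diagonal d * H⁻¹`,
every diagonal entry `A u u = ∑ w, H u w * d w * H⁻¹ w u` equals `2⁻ᵏ * ∑ w, d w`.
-/

open Matrix

/-- The standard Hadamard matrix of order `2^k`, indexed by `ℤ₂^k`,
with `(u,v)` entry `(-1)^(u·v)`. -/
noncomputable def stdHadamard (k : ℕ) :
    Matrix (Fin k → ZMod 2) (Fin k → ZMod 2) ℝ :=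
  Matrix.of fun u v => (-1 : ℝ) ^ (∑ i, (u i * v i).val)

lemma Matrix.mul_diagonal_mul_apply_self_of_forall_mul_eq {n R : Type*} [Fintype n]
    [DecidableEq n] [CommSemiring R] {P Q : Matrix n n R} {i : n} {c : R}
    (h : ∀ j, P i j * Q j i = c) (d : n → R) :
    (P * diagonal d * Q) i i = c * ∑ j, d j := by
  rw [mul_apply, Finset.mul_sum]
  exact Finset.sum_congr rfl fun j _ => by rw [mul_diagonal, ← h j]; ring

noncomputable def zmod2Sign (x : ZMod 2) : ℝ := (-1) ^ x.val

lemma sum_zmod2Sign_mul_mul_zmod2Sign_mul (x y : ZMod 2) :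
    ∑ b, zmod2Sign (x * b) * zmod2Sign (b * y) = if x = y then 2 else 0 := by
  rw [show ∀ f : ZMod 2 → ℝ, ∑ b, f b = f 0 + f 1 from Fin.sum_univ_two]
  have zmod2_cases : ∀ x : ZMod 2, x = 0 ∨ x = 1 := by decide
  rcases zmod2_cases x with rfl | rfl <;> rcases zmod2_cases y with rfl | rfl <;>
    norm_num [zmod2Sign, ZMod.val_one]

lemma stdHadamard_apply (k : ℕ) (u v : Fin k → ZMod 2) :
    stdHadamard k u v = ∏ i, zmod2Sign (u i * v i) := by
  simp [stdHadamard, zmod2Sign, Finset.prod_pow_eq_pow_sum]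

lemma stdHadamard_mul_self (k : ℕ) : stdHadamard k * stdHadamard k = (2 ^ k : ℝ) • 1 := by
  ext u v
  calc (stdHadamard k * stdHadamard k) u v
      = ∑ w : Fin k → ZMod 2, ∏ i, zmod2Sign (u i * w i) * zmod2Sign (w i * v i) := by
        simp only [mul_apply, stdHadamard_apply, Finset.prod_mul_distrib]
    _ = ∏ i, if u i = v i then (2 : ℝ) else 0 := by
        simp only [← sum_zmod2Sign_mul_mul_zmod2Sign_mul, Fintype.prod_sum]
    _ = ((2 ^ k : ℝ) • (1 : Matrix _ _ ℝ)) u v := by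
        simp [Fintype.prod_ite_zero, ← funext_iff, one_apply]

lemma inv_stdHadamard (k : ℕ) : (stdHadamard k)⁻¹ = (2 ^ k : ℝ)⁻¹ • stdHadamard k :=
  inv_eq_right_inv <| by
    rw [Matrix.mul_smul, stdHadamard_mul_self, smul_smul, inv_mul_cancel₀ (by positivity), one_smul]

lemma stdHadamard_mul_inv (k : ℕ) : stdHadamard k * (stdHadamard k)⁻¹ = 1 := by
  rw [inv_stdHadamard, Matrix.mul_smul, stdHadamard_mul_self, smul_smul,
    inv_mul_cancel₀ (by positivity), one_smul]

lemma stdHadamard_apply_mul_apply_swap (k : ℕ) (u v : Fin k → ZMod 2) :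
    stdHadamard k u v * stdHadamard k v u = 1 := by
  simp only [stdHadamard, of_apply, mul_comm (v _), ← mul_pow]
  norm_num

lemma stdHadamard_apply_mul_inv_apply (k : ℕ) (u v : Fin k → ZMod 2) :
    stdHadamard k u v * (stdHadamard k)⁻¹ v u = (2 ^ k : ℝ)⁻¹ := by
  rw [inv_stdHadamard, Matrix.smul_apply, smul_eq_mul, mul_left_comm,
    stdHadamard_apply_mul_apply_swap, mul_one]

theorem std_hadamard_diag_constant_diagonal_general (k : ℕ)
    (A : Matrix (Fin k → ZMod 2) (Fin k → ZMod 2) ℝ)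
    (hdiag : Matrix.IsDiag ((stdHadamard k)⁻¹ * A * stdHadamard k)) :
    ∀ u v, A u u = A v v := by
  set H := stdHadamard k
  have hA : A = H * diagonal (diag (H⁻¹ * A * H)) * H⁻¹ := by
    rw [hdiag.diagonal_diag, ← mul_assoc, ← mul_assoc, stdHadamard_mul_inv,
      one_mul, mul_assoc, stdHadamard_mul_inv, mul_one]
  intro u v
  rw [hA, mul_diagonal_mul_apply_self_of_forall_mul_eq (stdHadamard_apply_mul_inv_apply k u),
    mul_diagonal_mul_apply_self_of_forall_mul_eq (stdHadamard_apply_mul_inv_apply k v)]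

theorem std_hadamard_diag_constant_diagonal (k : ℕ)
    (A : Matrix (Fin k → ZMod 2) (Fin k → ZMod 2) ℝ)
    (hsymm : A.IsSymm)
    (h01 : ∀ u v, A u v = 0 ∨ A u v = 1)
    (hdiag : Matrix.IsDiag ((stdHadamard k)⁻¹ * A * stdHadamard k)) :
    ∀ u v, A u u = A v v :=
  std_hadamard_diag_constant_diagonal_general k A hdiag
end

section
/- A symmetric (0,1) matrix A of order 2^k with zero diagonal is diagonalized by the standard Hadamard matrix of order 2^k if and only if A is the adjacency matrix of a cubelike graph, i.e., there exists a set C ⊆ ℤ₂^k not containing 0 such that A_{uv} = 1 exactly when u + v ∈ C (vertices indexed by ℤ₂^k). -/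
open Matrix

lemma par (a b : ZMod 2) : (-1:ℝ)^((a+b).val) = (-1)^a.val * (-1)^b.val := by
  fin_cases a <;> fin_cases b <;>
    norm_num [show (2:ZMod 2).val = 0 from rfl, show (1:ZMod 2).val = 1 from rfl] <;> simp +decide [ZMod.val]

lemma H_symm {k} (u v : Fin k → ZMod 2) : stdHadamard k u v = stdHadamard k v u := by
  simp [stdHadamard, mul_comm]

lemma H_add {k} (u v w : Fin k → ZMod 2) :
    stdHadamard k (u+v) w = stdHadamard k u w * stdHadamard k v w := by
  simp only [stdHadamard, Matrix.of_apply]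
  rw [← Finset.prod_pow_eq_pow_sum, ← Finset.prod_pow_eq_pow_sum,
    ← Finset.prod_pow_eq_pow_sum, ← Finset.prod_mul_distrib]
  refine Finset.prod_congr rfl fun i _ => ?_
  have h : (u+v) i * w i = u i * w i + v i * w i := by simp [add_mul]
  rw [h, par]

lemma H_add' {k} (w u v : Fin k → ZMod 2) :
    stdHadamard k w (u+v) = stdHadamard k w u * stdHadamard k w v := by
  rw [H_symm, H_add, H_symm u w, H_symm v w]

lemma H_zero {k} (w : Fin k → ZMod 2) : stdHadamard k 0 w = 1 := by
  simp [stdHadamard]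

lemma vadd_self {k} (v : Fin k → ZMod 2) : v + v = 0 := by
  funext i
  exact CharTwo.add_self_eq_zero (v i)

lemma vadd_eq_zero_iff {k} (u v : Fin k → ZMod 2) : u + v = 0 ↔ u = v := by
  constructor
  · intro h
    have h2 := congrArg (fun x => x + v) h
    rwa [add_assoc, vadd_self, add_zero, zero_add] at h2
  · rintro rfl; exact vadd_self _

lemma card_V (k : ℕ) : Fintype.card (Fin k → ZMod 2) = 2^k := by
  simp [Fintype.card_fun]

lemma orth {k} (w : Fin k → ZMod 2) :
    ∑ u, stdHadamard k u w = if w = 0 then (2:ℝ)^k else 0 := by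
  by_cases hw : w = 0
  · subst hw
    have h1 : ∀ u : Fin k → ZMod 2, stdHadamard k u 0 = 1 := by
      intro u; rw [H_symm]; exact H_zero u
    simp [h1, card_V]
  · rw [if_neg hw]
    obtain ⟨j, hj⟩ : ∃ j, w j ≠ 0 := by
      by_contra h
      push_neg at h
      exact hw (funext h)
    have hj1 : w j = 1 := by
      have h2 : ∀ a : ZMod 2, a ≠ 0 → a = 1 := by decide
      exact h2 _ hj
    set e : Fin k → ZMod 2 := fun i => if i = j then 1 else 0 with he
    have hHe : stdHadamard k e w = -1 := by
      have hval : ∀ i, (e i * w i).val = if i = j then 1 else 0 := by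
        intro i
        by_cases hij : i = j <;> simp [he, hij, hj1, ZMod.val_one]
      simp only [stdHadamard, Matrix.of_apply, hval]
      rw [Finset.sum_ite_eq' Finset.univ j (fun _ => 1)]
      simp
    have hshift : ∑ u, stdHadamard k (u + e) w = ∑ u, stdHadamard k u w :=
      Fintype.sum_equiv (Equiv.addRight e) _ _ (fun u => rfl)
    have : ∑ u, stdHadamard k (u + e) w = -∑ u, stdHadamard k u w := by
      simp only [H_add, hHe, mul_neg_one]
      rw [Finset.sum_neg_distrib]
    linarith [hshift, this]

lemma HH {k} : stdHadamard k * stdHadamard k = ((2:ℝ)^k) • (1 : Matrix (Fin k → ZMod 2) (Fin k → ZMod 2) ℝ) := by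
  ext u v
  rw [Matrix.mul_apply]
  have h1 : ∀ x, stdHadamard k u x * stdHadamard k x v = stdHadamard k x (u + v) := by
    intro x
    rw [H_add', H_symm x u, H_symm x v]
  simp only [h1]
  rw [orth]
  by_cases h : u = v
  · subst h
    rw [if_pos (vadd_self u)]
    simp [Matrix.one_apply]
  · rw [if_neg (fun hc => h ((vadd_eq_zero_iff u v).1 hc))]
    simp [Matrix.one_apply, h]

lemma Hinv {k} : (stdHadamard k)⁻¹ = ((2:ℝ)^k)⁻¹ • stdHadamard k := by
  apply Matrix.inv_eq_right_inv
  rw [Matrix.mul_smul, HH, smul_smul, inv_mul_cancel₀ (by positivity), one_smul]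
lemma H_mul_H {k} (u x v : Fin k → ZMod 2) :
    stdHadamard k u x * stdHadamard k x v = stdHadamard k x (u+v) := by
  rw [H_add', H_symm x u, H_symm x v]

theorem std_hadamard_diag_iff_cubelike (k : ℕ)
    (A : Matrix (Fin k → ZMod 2) (Fin k → ZMod 2) ℝ)
    (hsymm : A.IsSymm)
    (h01 : ∀ u v, A u v = 0 ∨ A u v = 1)
    (hzero : ∀ u, A u u = 0) :
    Matrix.IsDiag ((stdHadamard k)⁻¹ * A * stdHadamard k) ↔
      ∃ C : Finset (Fin k → ZMod 2), (0 : Fin k → ZMod 2) ∉ C ∧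
        ∀ u v, A u v = if u + v ∈ C then 1 else 0 := by
  classical
  have h2k : ((2:ℝ)^k) ≠ 0 := by positivity
  have hH1 : stdHadamard k * (stdHadamard k)⁻¹ = 1 := by
    rw [Hinv, Matrix.mul_smul, HH, smul_smul, inv_mul_cancel₀ h2k, one_smul]
  have hH1' : (stdHadamard k)⁻¹ * stdHadamard k = 1 := by
    rw [Hinv, Matrix.smul_mul, HH, smul_smul, inv_mul_cancel₀ h2k, one_smul]
  constructor
  · intro hdiag
    set D := (stdHadamard k)⁻¹ * A * stdHadamard k with hD
    have hA : A = stdHadamard k * D * (stdHadamard k)⁻¹ := by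
      rw [hD]
      simp only [← Matrix.mul_assoc]
      rw [hH1, Matrix.one_mul, Matrix.mul_assoc, hH1, Matrix.mul_one]
    have hcirc : ∀ u v, A u v
        = ((2:ℝ)^k)⁻¹ * ∑ y, D y y * stdHadamard k y (u+v) := by
      intro u v
      conv_lhs => rw [hA]
      rw [Hinv, Matrix.mul_smul, Matrix.smul_apply, smul_eq_mul]
      congr 1
      rw [Matrix.mul_apply]
      have hHD : ∀ y, (stdHadamard k * D) u y = stdHadamard k u y * D y y := by
        intro y
        rw [Matrix.mul_apply]
        rw [Finset.sum_eq_single y]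
        · intro x _ hxy
          rw [hdiag hxy, mul_zero]
        · intro hy; exact absurd (Finset.mem_univ y) hy
      simp only [hHD]
      refine Finset.sum_congr rfl fun y _ => ?_
      rw [mul_comm (stdHadamard k u y) (D y y), mul_assoc, H_mul_H]
    have hshift : ∀ u v, A u v = A (u+v) 0 := by
      intro u v
      rw [hcirc u v, hcirc (u+v) 0, add_zero]
    refine ⟨Finset.univ.filter (fun c => A c 0 = 1), ?_, ?_⟩
    · simp [Finset.mem_filter, hzero]
    · intro u v
      rw [hshift u v]
      by_cases h : u + v ∈ Finset.univ.filter (fun c => A c 0 = 1)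
      · rw [if_pos h]
        exact (Finset.mem_filter.1 h).2
      · rw [if_neg h]
        rcases h01 (u+v) 0 with h0 | h1
        · exact h0
        · exact absurd (Finset.mem_filter.2 ⟨Finset.mem_univ (u+v), h1⟩) h
  · rintro ⟨C, hC0, hC⟩
    have hsm : (stdHadamard k)⁻¹ * A * stdHadamard k
        = ((2:ℝ)^k)⁻¹ • (stdHadamard k * A * stdHadamard k) := by
      simp only [Hinv, Matrix.smul_mul]
    rw [hsm]
    refine Matrix.IsDiag.smul _ ?_
    intro x y hxy
    have hxy0 : x + y ≠ 0 := fun hc => hxy ((vadd_eq_zero_iff x y).1 hc)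
    have inner2 : ∀ u, ∑ v, A u v * stdHadamard k v y
        = stdHadamard k u y * ∑ c, (if c ∈ C then stdHadamard k c y else 0) := by
      intro u
      have hre : ∑ v, A u v * stdHadamard k v y
          = ∑ c, A u (u+c) * stdHadamard k (u+c) y :=
        (Fintype.sum_equiv (Equiv.addLeft u) _ _ (fun c => rfl)).symm
      rw [hre, Finset.mul_sum]
      refine Finset.sum_congr rfl fun c _ => ?_
      have huc : u + (u + c) = c := by
        rw [← add_assoc, vadd_self, zero_add]
      rw [hC u (u+c), huc, H_add]
      by_cases h : c ∈ C <;> simp [h, mul_comm]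
    show (stdHadamard k * A * stdHadamard k) x y = 0
    rw [Matrix.mul_assoc, Matrix.mul_apply]
    have hAH : ∀ u, (A * stdHadamard k) u y
        = stdHadamard k u y * ∑ c, (if c ∈ C then stdHadamard k c y else 0) := by
      intro u
      rw [Matrix.mul_apply]
      exact inner2 u
    simp only [hAH]
    rw [show ∀ S : ℝ, ∑ u, stdHadamard k x u * (stdHadamard k u y * S)
        = (∑ u, stdHadamard k u (x+y)) * S from ?_]
    · rw [orth, if_neg hxy0, zero_mul]
    · intro S
      rw [Finset.sum_mul]
      refine Finset.sum_congr rfl fun u _ => ?_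
      rw [← mul_assoc, H_mul_H]
end

section
/- If G₁ and G₂ are graphs on the same n vertices both diagonalized by the same Hadamard matrix H of order n, then the merge, whose Laplacian is L₃ = [[w₁L₁ + w₂D₂, −w₂A₂],[−w₂A₂, w₁L₁ + w₂D₂]] (where L₂ = D₂ − A₂), is diagonalized by the Hadamard matrix [[H,H],[H,−H]] of order 2n; moreover if L₁, L₂ have eigenvalue matrices Λ₁, Λ₂ and G₂ is d₂-regular (D₂ = d₂I), the eigenvalue matrix of L₃ is diag(w₁Λ₁ + w₂Λ₂, w₁Λ₁ − w₂Λ₂ + 2w₂d₂I). -/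
open Matrix

/-!
Conjugating by the block matrix `[[H, H], [H, -H]]` sends `diag(X, Y)` to the block matrix with
diagonal blocks `H (X + Y) Hᵀ` and off-diagonal blocks `H (X - Y) Hᵀ`. Since `Λ ↦ H diag(Λ) Hᵀ`
is linear and sends a constant `c` to `n c • 1` when `H Hᵀ = n • 1`, the sum and the difference of
the two proposed eigenvalue vectors produce exactly `2n (w₁ L₁ + w₂ d₂ 1)` and `2n w₂ (L₂ - d₂ 1) = -2n w₂ A₂`.
-/

section BlockConjugation

variable {m R : Type*} [Fintype m] [CommRing R]

theorem fromBlocks_neg_mul_fromBlocks_mul_transpose (P X Y : Matrix m m R) :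
    fromBlocks P P P (-P) * fromBlocks X 0 0 Y * (fromBlocks P P P (-P))ᵀ =
      fromBlocks (P * (X + Y) * Pᵀ) (P * (X - Y) * Pᵀ)
        (P * (X - Y) * Pᵀ) (P * (X + Y) * Pᵀ) := by
  simp only [fromBlocks_transpose, fromBlocks_multiply, transpose_neg, Matrix.mul_zero, add_zero,
    zero_add, Matrix.mul_neg, Matrix.neg_mul, neg_neg, Matrix.mul_add, Matrix.add_mul,
    sub_eq_add_neg]

variable [DecidableEq m]

def conjDiagonal (P : Matrix m m R) : (m → R) →ₗ[R] Matrix m m R :=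
  LinearMap.mulRight R Pᵀ ∘ₗ LinearMap.mulLeft R P ∘ₗ diagonalLinearMap m R R

theorem conjDiagonal_apply (P : Matrix m m R) (Λ : m → R) :
    conjDiagonal P Λ = P * diagonal Λ * Pᵀ := rfl

theorem conjDiagonal_const {P : Matrix m m R} {c : R} (hP : P * Pᵀ = c • 1) (d : R) :
    conjDiagonal P (fun _ => d) = (c * d) • 1 := by
  rw [conjDiagonal_apply, ← smul_one_eq_diagonal, Matrix.mul_smul, Matrix.mul_one, Matrix.smul_mul,
    hP, smul_smul, mul_comm]

theorem fromBlocks_neg_mul_diagonal_sumElim_mul_transpose (P : Matrix m m R) (a b : m → R) :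
    fromBlocks P P P (-P) * diagonal (Sum.elim a b) * (fromBlocks P P P (-P))ᵀ =
      fromBlocks (conjDiagonal P (a + b)) (conjDiagonal P (a - b))
        (conjDiagonal P (a - b)) (conjDiagonal P (a + b)) := by
  rw [← fromBlocks_diagonal, fromBlocks_neg_mul_fromBlocks_mul_transpose, map_add, map_sub,
    conjDiagonal_apply, conjDiagonal_apply, Matrix.mul_add, Matrix.add_mul, Matrix.mul_sub,
    Matrix.sub_mul]

end BlockConjugation

theorem merge_hadamard_diagonalizable_general (n : ℕ)
    (H : Matrix (Fin n) (Fin n) ℝ)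
    (hH : H * Hᵀ = (n : ℝ) • 1)
    (L₁ L₂ A₂ : Matrix (Fin n) (Fin n) ℝ) (d₂ w₁ w₂ : ℝ)
    (Λ₁ Λ₂ : Fin n → ℝ)
    (hL₁ : L₁ = ((n : ℝ))⁻¹ • (H * Matrix.diagonal Λ₁ * Hᵀ))
    (hL₂ : L₂ = ((n : ℝ))⁻¹ • (H * Matrix.diagonal Λ₂ * Hᵀ))
    (hreg : L₂ = d₂ • (1 : Matrix (Fin n) (Fin n) ℝ) - A₂) :
    Matrix.fromBlocks
        (w₁ • L₁ + (w₂ * d₂) • (1 : Matrix (Fin n) (Fin n) ℝ)) (-(w₂ • A₂))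
        (-(w₂ • A₂)) (w₁ • L₁ + (w₂ * d₂) • (1 : Matrix (Fin n) (Fin n) ℝ)) =
      ((2 * n : ℝ))⁻¹ • ((Matrix.fromBlocks H H H (-H)) *
        Matrix.diagonal (Sum.elim
          (fun ℓ => w₁ * Λ₁ ℓ + w₂ * Λ₂ ℓ)
          (fun ℓ => w₁ * Λ₁ ℓ - w₂ * Λ₂ ℓ + 2 * w₂ * d₂)) *
        (Matrix.fromBlocks H H H (-H))ᵀ) := by
  rcases Nat.eq_zero_or_pos n with rfl | hn
  · exact Subsingleton.elim _ _
  have hn' : (n : ℝ) ≠ 0 := by positivity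
  have hΛ₁ : conjDiagonal H Λ₁ = (n : ℝ) • L₁ := by
    rw [hL₁, smul_inv_smul₀ hn', conjDiagonal_apply]
  have hΛ₂ : conjDiagonal H Λ₂ = (n : ℝ) • L₂ := by
    rw [hL₂, smul_inv_smul₀ hn', conjDiagonal_apply]
  have hsum : (fun ℓ => w₁ * Λ₁ ℓ + w₂ * Λ₂ ℓ) + (fun ℓ => w₁ * Λ₁ ℓ - w₂ * Λ₂ ℓ + 2 * w₂ * d₂) =
      (2 * w₁) • Λ₁ + fun _ => 2 * w₂ * d₂ := by
    ext ℓ; simp only [Pi.add_apply, Pi.smul_apply, smul_eq_mul]; ring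
  have hdiff : (fun ℓ => w₁ * Λ₁ ℓ + w₂ * Λ₂ ℓ) - (fun ℓ => w₁ * Λ₁ ℓ - w₂ * Λ₂ ℓ + 2 * w₂ * d₂) =
      (2 * w₂) • Λ₂ + fun _ => -(2 * w₂ * d₂) := by
    ext ℓ; simp only [Pi.add_apply, Pi.sub_apply, Pi.smul_apply, smul_eq_mul]; ring
  rw [fromBlocks_neg_mul_diagonal_sumElim_mul_transpose, hsum, hdiff, map_add, map_add,
    map_smul, map_smul, conjDiagonal_const hH, conjDiagonal_const hH, hΛ₁, hΛ₂, hreg,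
    fromBlocks_smul]
  congr 1 <;> match_scalars <;> field_simp <;> ring

theorem merge_hadamard_diagonalizable (n : ℕ)
    (H : Matrix (Fin n) (Fin n) ℝ)
    (hent : ∀ i j, H i j = 1 ∨ H i j = -1)
    (hH : H * Hᵀ = (n : ℝ) • 1)
    (L₁ L₂ A₂ : Matrix (Fin n) (Fin n) ℝ) (d₂ w₁ w₂ : ℝ)
    (Λ₁ Λ₂ : Fin n → ℝ)
    (hL₁ : L₁ = ((n : ℝ))⁻¹ • (H * Matrix.diagonal Λ₁ * Hᵀ))
    (hL₂ : L₂ = ((n : ℝ))⁻¹ • (H * Matrix.diagonal Λ₂ * Hᵀ))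
    (hreg : L₂ = d₂ • (1 : Matrix (Fin n) (Fin n) ℝ) - A₂) :
    Matrix.fromBlocks
        (w₁ • L₁ + (w₂ * d₂) • (1 : Matrix (Fin n) (Fin n) ℝ)) (-(w₂ • A₂))
        (-(w₂ • A₂)) (w₁ • L₁ + (w₂ * d₂) • (1 : Matrix (Fin n) (Fin n) ℝ)) =
      ((2 * n : ℝ))⁻¹ • ((Matrix.fromBlocks H H H (-H)) *
        Matrix.diagonal (Sum.elim
          (fun ℓ => w₁ * Λ₁ ℓ + w₂ * Λ₂ ℓ)
          (fun ℓ => w₁ * Λ₁ ℓ - w₂ * Λ₂ ℓ + 2 * w₂ * d₂)) *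
        (Matrix.fromBlocks H H H (-H))ᵀ) :=
  merge_hadamard_diagonalizable_general n H hH L₁ L₂ A₂ d₂ w₁ w₂ Λ₁ Λ₂ hL₁ hL₂ hreg
end

section
/- Let w₁,…,w_n be nonzero integers, exactly d of which are odd, and let C_n = (w₁K₂) □ (w₂K₂) □ ⋯ □ (w_nK₂) be the weighted hypercube (Cartesian product of weighted edges). Then for each vertex u ∈ {0,1}^n there is a vertex v at Hamming distance d from u such that C_n has perfect state transfer from u to v at time π/2. Concretely, v = u + s where s ∈ {0,1}^n is the indicator vector of the odd weights. -/
open Matrix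
open scoped Classical

/-- The factor of the weighted hypercube Laplacian acting on coordinate `j`:
`I ⊗ ⋯ ⊗ L(K₂) ⊗ ⋯ ⊗ I` where `L(K₂) = [[1,-1],[-1,1]]`. -/
noncomputable def edgeFactor (n : ℕ) (j : Fin n) :
    Matrix (Fin n → ZMod 2) (Fin n → ZMod 2) ℝ :=
  Matrix.of fun u v =>
    if u = v then 1 else if v = Function.update u j (u j + 1) then -1 else 0

/-!
The edge factor for coordinate `j` is `1 - T (e j)`, where `T s` is the permutation matrix of
the translation `u ↦ u + s` of `(ZMod 2)ⁿ` and `e j` is the `j`-th unit vector. As `T (e j)` is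
an involution, `(1 - T (e j)) / 2` is idempotent, so `exp (i π w / 2 • (1 - T (e j)))` is
`T (e j)` for odd `w` and `1` for even `w` (because `exp (i π w) = (-1) ^ w`). The translation
matrices commute, so `exp (i π / 2 • L)` is the product of these factors, which is the
translation matrix `T s` for the indicator `s` of the odd weights; its `(u, u + s)` entry is `1`.
-/

open NormedSpace

theorem IsIdempotentElem.exp_smul {𝕂 𝔸 : Type*} [RCLike 𝕂] [NormedRing 𝔸]
    [NormedAlgebra 𝕂 𝔸] [CompleteSpace 𝔸] {E : 𝔸} (hE : IsIdempotentElem E) (c : 𝕂) :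
    exp (c • E) = exp c • E + (1 - E) := by
  have hpow : ∀ k, (c • E) ^ k = c ^ k • E + if k = 0 then 1 - E else 0 := by
    rintro (_ | k)
    · simp
    · simp [smul_pow, hE.pow_succ_eq]
  have hsum :
      HasSum (fun k => (k.factorial⁻¹ : 𝕂) • (c • E) ^ k) (exp c • E + (1 - E)) := by
    simp only [hpow, smul_add, ← smul_assoc, smul_ite, smul_zero]
    refine ((exp_series_hasSum_exp' (𝕂 := 𝕂) c).smul_const E).add ?_
    convert hasSum_ite_eq 0 (1 - E) using 2 with k
    split_ifs with hk <;> simp [hk]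
  exact (exp_series_hasSum_exp' (𝕂 := 𝕂) (c • E)).unique hsum

theorem exp_int_mul_half_pi_I_smul_one_sub {𝔸 : Type*} [NormedRing 𝔸] [NormedAlgebra ℂ 𝔸]
    [CompleteSpace 𝔸] {P : 𝔸} (hP : P * P = 1) (k : ℤ) :
    exp ((Complex.I * ((Real.pi / 2 : ℝ) : ℂ) * k) • (1 - P)) = if Odd k then P else 1 := by
  have hsq : (1 - P) * (1 - P) = (2 : ℂ) • (1 - P) := by
    rw [sub_mul, mul_sub, mul_sub, hP, two_smul]; noncomm_ring
  have hE : IsIdempotentElem ((2⁻¹ : ℂ) • (1 - P)) := by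
    rw [IsIdempotentElem, smul_mul_smul_comm, hsq, smul_smul]
    norm_num
  have hscalar : (Complex.I * ((Real.pi / 2 : ℝ) : ℂ) * k) • (1 - P)
      = (k * (Real.pi * Complex.I)) • (2⁻¹ : ℂ) • (1 - P) := by
    rw [smul_smul]; push_cast; ring_nf
  rw [hscalar, hE.exp_smul, ← Complex.exp_eq_exp_ℂ, Complex.exp_int_mul, Complex.exp_pi_mul_I]
  split_ifs with hk
  · rw [hk.neg_one_zpow]; module
  · rw [(Int.not_odd_iff_even.mp hk).neg_one_zpow]; simp

namespace Matrix

variable {G R : Type*} [AddCommGroup G] [DecidableEq G] [Fintype G] [Semiring R]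

theorem permMatrix_addRight_add (s t : G) :
    (Equiv.addRight (s + t)).permMatrix R =
      (Equiv.addRight s).permMatrix R * (Equiv.addRight t).permMatrix R := by
  rw [Equiv.addRight_add, permMatrix_mul]

theorem commute_permMatrix_addRight (s t : G) :
    Commute ((Equiv.addRight s).permMatrix R) ((Equiv.addRight t).permMatrix R) := by
  rw [Commute, SemiconjBy, ← permMatrix_addRight_add, ← permMatrix_addRight_add, add_comm]

theorem permMatrix_addRight_mul_self {t : G} (ht : t + t = 0) :
    (Equiv.addRight t).permMatrix R * (Equiv.addRight t).permMatrix R = 1 := by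
  rw [← permMatrix_addRight_add, ht, Equiv.addRight_zero, permMatrix_one]

theorem noncommProd_permMatrix_addRight {ι : Type*} (s : Finset ι) (f : ι → G)
    (comm : (s : Set ι).Pairwise
      (Function.onFun Commute fun j => (Equiv.addRight (f j)).permMatrix R)) :
    s.noncommProd (fun j => (Equiv.addRight (f j)).permMatrix R) comm =
      (Equiv.addRight (∑ j ∈ s, f j)).permMatrix R := by
  induction s using Finset.cons_induction with
  | empty => simp
  | cons a s _ ih => rw [Finset.noncommProd_cons, ih, Finset.sum_cons, permMatrix_addRight_add]

end Matrix

theorem Function.update_add_eq_add_single {ι M : Type*} [DecidableEq ι] [AddMonoid M]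
    (f : ι → M) (j : ι) (a : M) : Function.update f j (f j + a) = f + Pi.single j a := by
  ext i
  by_cases h : i = j
  · subst h; simp
  · simp [h]

theorem edgeFactor_map_ofReal (n : ℕ) (j : Fin n) :
    (edgeFactor n j).map (↑) = 1 - (Equiv.addRight (Pi.single j 1)).permMatrix ℂ := by
  ext u v
  by_cases h : u = v
  · subst h; simp [edgeFactor]
  by_cases hv : v = u + Pi.single j 1
  · subst hv; simp [edgeFactor, Function.update_add_eq_add_single]
  · simp [edgeFactor, Function.update_add_eq_add_single, h, hv, one_apply, Ne.symm hv]

theorem exp_half_pi_I_smul_sum_edgeFactor (n : ℕ) (w : Fin n → ℤ) :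
    exp ((Complex.I * ((Real.pi / 2 : ℝ) : ℂ)) •
        (∑ j, (w j : ℝ) • edgeFactor n j).map (fun x => (x : ℂ))) =
      (Equiv.addRight fun i => if Odd (w i) then (1 : ZMod 2) else 0).permMatrix ℂ := by
  set e : Fin n → (Fin n → ZMod 2) := fun j => Pi.single j 1
  set A : Fin n → Matrix (Fin n → ZMod 2) (Fin n → ZMod 2) ℂ := fun j =>
    (Complex.I * ((Real.pi / 2 : ℝ) : ℂ) * w j) • (1 - (Equiv.addRight (e j)).permMatrix ℂ)
  have hsum : (Complex.I * ((Real.pi / 2 : ℝ) : ℂ)) •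
      (∑ j, (w j : ℝ) • edgeFactor n j).map (fun x => (x : ℂ)) = ∑ j, A j := by
    ext u v
    simp [A, e, ← edgeFactor_map_ofReal, Matrix.sum_apply, Finset.mul_sum, mul_assoc]
  have hcomm : ((Finset.univ : Finset (Fin n)) : Set (Fin n)).Pairwise
      (Function.onFun Commute A) := fun _ _ _ _ _ =>
    (((Commute.one_left _).sub_left ((Commute.one_right _).sub_right
      (commute_permMatrix_addRight _ _))).smul_left _).smul_right _
  have hA : ∀ j, exp (A j) =
      (Equiv.addRight (Pi.single j (if Odd (w j) then 1 else 0))).permMatrix ℂ := by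
    intro j
    have hinv : (Equiv.addRight (e j)).permMatrix ℂ * (Equiv.addRight (e j)).permMatrix ℂ = 1 :=
      permMatrix_addRight_mul_self <| by
        rw [← Pi.single_add, CharTwo.add_self_eq_zero, Pi.single_zero]
    -- `exp` does not depend on the norm used to apply the Banach-algebra lemma
    open scoped Matrix.Norms.Operator in
    refine (exp_int_mul_half_pi_I_smul_one_sub hinv (w j)).trans ?_
    split_ifs <;> simp [e]
  rw [hsum, Matrix.exp_sum_of_commute _ _ hcomm]
  refine ((Finset.noncommProd_congr rfl (fun j _ => hA j) _).trans
    (noncommProd_permMatrix_addRight _ _ _)).trans ?_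
  rw [Finset.univ_sum_single]

theorem weighted_hypercube_pst_general (n : ℕ) (w : Fin n → ℤ)
    (d : ℕ) (hd : d = (Finset.univ.filter fun j => Odd (w j)).card)
    (L : Matrix (Fin n → ZMod 2) (Fin n → ZMod 2) ℝ)
    (hL : L = ∑ j, (w j : ℝ) • edgeFactor n j) :
    ∀ u : Fin n → ZMod 2, ∃ v : Fin n → ZMod 2,
      (Finset.univ.filter fun i => v i ≠ u i).card = d ∧
      v = u + (fun i => if Odd (w i) then (1 : ZMod 2) else 0) ∧
      pstHalfPi L u v := by
  intro u
  refine ⟨_, ?_, rfl, ?_⟩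
  · rw [hd]
    congr 1
    ext i
    by_cases h : Odd (w i) <;> simp [h]
  · rw [pstHalfPi, hL, exp_half_pi_I_smul_sum_edgeFactor]
    simp

theorem weighted_hypercube_pst (n : ℕ) (w : Fin n → ℤ) (hw : ∀ j, w j ≠ 0)
    (d : ℕ) (hd : d = (Finset.univ.filter fun j => Odd (w j)).card)
    (L : Matrix (Fin n → ZMod 2) (Fin n → ZMod 2) ℝ)
    (hL : L = ∑ j, (w j : ℝ) • edgeFactor n j) :
    ∀ u : Fin n → ZMod 2, ∃ v : Fin n → ZMod 2,
      (Finset.univ.filter fun i => v i ≠ u i).card = d ∧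
      v = u + (fun i => if Odd (w i) then (1 : ZMod 2) else 0) ∧
      pstHalfPi L u v :=
  weighted_hypercube_pst_general n w d hd L hL
end

section
/- Let G be a simple, connected, unweighted 4-regular graph on n vertices that is Hadamard diagonalizable and has perfect state transfer at time π/2 between two distinct vertices. Then n ≤ 16. -/
open Matrix Finset

section AuxPM

lemma pm_sum_card {α : Type*} [DecidableEq α] {s : Finset α} {f : α → ℝ}
    (hf : ∀ x ∈ s, f x = 1 ∨ f x = -1) :
    ∃ m : ℕ, m ≤ s.card ∧ ∑ x ∈ s, f x = (s.card : ℝ) - 2 * m := by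
  classical
  refine ⟨(s.filter (fun x => f x = -1)).card, Finset.card_le_card (filter_subset _ _), ?_⟩
  rw [← Finset.sum_filter_add_sum_filter_not s (fun x => f x = -1)]
  have h1 : ∑ x ∈ s.filter (fun x => f x = -1), f x
      = -((s.filter (fun x => f x = -1)).card : ℝ) := by
    rw [Finset.sum_congr rfl (fun x hx => (Finset.mem_filter.mp hx).2)]
    simp
  have h2 : ∑ x ∈ s.filter (fun x => ¬ f x = -1), f x
      = ((s.filter (fun x => ¬ f x = -1)).card : ℝ) := by
    have : ∀ x ∈ s.filter (fun x => ¬ f x = -1), f x = 1 := by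
      intro x hx
      rcases hf x (Finset.mem_filter.mp hx).1 with h | h
      · exact h
      · exact absurd h (Finset.mem_filter.mp hx).2
    rw [Finset.sum_congr rfl this]
    simp
  have h3 : (s.filter (fun x => f x = -1)).card + (s.filter (fun x => ¬ f x = -1)).card = s.card :=
    Finset.card_filter_add_card_filter_not _
  rw [h1, h2]
  have := congrArg (fun t : ℕ => (t : ℝ)) h3
  push_cast at this ⊢
  linarith

lemma pm_sum_eq_card {α : Type*} {s : Finset α} {f : α → ℝ}
    (hf : ∀ x ∈ s, f x = 1 ∨ f x = -1) (h : ∑ x ∈ s, f x = (s.card : ℝ)) :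
    ∀ x ∈ s, f x = 1 := by
  by_contra hc
  push_neg at hc
  obtain ⟨x, hx, hfx⟩ := hc
  have hlt : ∑ y ∈ s, f y < ∑ y ∈ s, (1 : ℝ) := by
    refine Finset.sum_lt_sum (fun y hy => ?_) ⟨x, hx, ?_⟩
    · rcases hf y hy with h1 | h1 <;> rw [h1] <;> norm_num
    · rcases hf x hx with h1 | h1
      · exact absurd h1 hfx
      · rw [h1]; norm_num
  simp only [Finset.sum_const, nsmul_eq_mul, mul_one] at hlt
  rw [h] at hlt
  exact lt_irrefl _ hlt

end AuxPM

section AuxConj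

variable {p : Type*} [Fintype p] [DecidableEq p]

lemma conj_mul_conj {R : Type*} [Field R] (H : Matrix p p R) (c : R) (hc : c ≠ 0)
    (hH : Hᵀ * H = c • 1) (u v : p → R) :
    (c⁻¹ • (H * diagonal u * Hᵀ)) * (c⁻¹ • (H * diagonal v * Hᵀ))
      = c⁻¹ • (H * diagonal (fun i => u i * v i) * Hᵀ) := by
  have : (H * diagonal u * Hᵀ) * (H * diagonal v * Hᵀ)
      = c • (H * diagonal (fun i => u i * v i) * Hᵀ) := by
    calc (H * diagonal u * Hᵀ) * (H * diagonal v * Hᵀ)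
        = H * diagonal u * (Hᵀ * H) * (diagonal v * Hᵀ) := by
          simp only [Matrix.mul_assoc]
      _ = H * diagonal u * (c • 1) * (diagonal v * Hᵀ) := by rw [hH]
      _ = c • (H * (diagonal u * diagonal v) * Hᵀ) := by
          simp only [Matrix.mul_smul, Matrix.smul_mul, Matrix.mul_one, Matrix.mul_assoc]
      _ = c • (H * diagonal (fun i => u i * v i) * Hᵀ) := by
          rw [diagonal_mul_diagonal]
  rw [smul_mul_smul_comm, this, smul_smul]
  congr 1
  field_simp

lemma trace_conj {R : Type*} [Field R] (H : Matrix p p R) (c : R) (hc : c ≠ 0)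
    (hH : Hᵀ * H = c • 1) (v : p → R) :
    Matrix.trace (c⁻¹ • (H * diagonal v * Hᵀ)) = ∑ i, v i := by
  rw [trace_smul, Matrix.trace_mul_comm, ← Matrix.mul_assoc, hH]
  rw [Matrix.smul_mul, Matrix.one_mul, trace_smul, trace_diagonal]
  field_simp
  rw [smul_smul, one_div, inv_mul_cancel₀ hc, one_smul]

end AuxConj

section AuxExp

lemma map_ofReal_smul {p : Type*} [Fintype p] (r : ℝ) (M : Matrix p p ℝ) :
    (r • M).map (fun x => (x:ℂ)) = (r:ℂ) • M.map (fun x => (x:ℂ)) := by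
  ext a b
  simp [Matrix.map_apply]

lemma exp_entry (n : ℕ) (hn : (n:ℝ) ≠ 0) (H : Matrix (Fin n) (Fin n) ℝ)
    (Λ ε : Fin n → ℝ)
    (hH : H * Hᵀ = (n:ℝ) • 1)
    (hexp : ∀ i, Complex.exp ((Complex.I * ((Real.pi/2 : ℝ):ℂ)) * (Λ i : ℂ)) = (ε i : ℂ))
    (L : Matrix (Fin n) (Fin n) ℝ)
    (hdiag : L = ((n:ℝ))⁻¹ • (H * Matrix.diagonal Λ * Hᵀ)) (j k : Fin n) :
    (NormedSpace.exp ((Complex.I * ((Real.pi / 2 : ℝ) : ℂ)) • L.map (fun x => (x : ℂ)))) j k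
      = (n:ℂ)⁻¹ * ((∑ i, H j i * ε i * H k i : ℝ) : ℂ) := by
  classical
  set c : ℂ := Complex.I * ((Real.pi / 2 : ℝ) : ℂ) with hc
  set Hc : Matrix (Fin n) (Fin n) ℂ := H.map (fun x => (x:ℂ)) with hHc
  have hnc : (n:ℂ) ≠ 0 := by exact_mod_cast fun h => hn (by exact_mod_cast h)
  have hmap : L.map (fun x => (x:ℂ))
      = (n:ℂ)⁻¹ • (Hc * Matrix.diagonal (fun i => (Λ i : ℂ)) * Hcᵀ) := by
    ext a b
    simp only [hdiag, Matrix.map_apply, Matrix.smul_apply, Matrix.mul_apply,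
      Matrix.mul_diagonal, Matrix.transpose_apply, smul_eq_mul, hHc,
      Matrix.diagonal_apply, apply_ite Complex.ofReal, Complex.ofReal_zero]
    push_cast [apply_ite Complex.ofReal]
    ring
  have hHcmul : Hc * Hcᵀ = (n:ℂ) • 1 := by
    ext a b
    have h2 : (H * Hᵀ) a b = (((n:ℝ) • 1 : Matrix (Fin n) (Fin n) ℝ)) a b := by rw [hH]
    simp only [Matrix.mul_apply, Matrix.transpose_apply, Matrix.smul_apply, Matrix.one_apply,
      smul_eq_mul, mul_ite, mul_one, mul_zero] at h2 ⊢
    simp only [hHc, Matrix.map_apply]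
    rw [show (∑ x, ((H a x : ℂ) * (H b x : ℂ))) = ((∑ x, H a x * H b x : ℝ) : ℂ) from by
      push_cast; rfl, h2]
    split <;> simp
  have hinv1 : Hc * ((n:ℂ)⁻¹ • Hcᵀ) = 1 := by
    rw [Matrix.mul_smul, hHcmul, smul_smul, inv_mul_cancel₀ hnc, one_smul]
  have hunit : IsUnit Hc := by
    have : Invertible Hc := invertibleOfRightInverse _ _ hinv1
    exact isUnit_of_invertible Hc
  have hinv : Hc⁻¹ = (n:ℂ)⁻¹ • Hcᵀ := Matrix.inv_eq_right_inv hinv1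
  have harg : c • L.map (fun x => (x:ℂ))
      = Hc * Matrix.diagonal (fun i => c * (Λ i : ℂ)) * Hc⁻¹ := by
    rw [hmap, hinv]
    rw [show Matrix.diagonal (fun i => c * (Λ i : ℂ)) = c • Matrix.diagonal (fun i => (Λ i : ℂ))
      from by ext a b; by_cases hab : a = b <;> simp [Matrix.diagonal_apply, hab]]
    simp only [Matrix.mul_smul, Matrix.smul_mul, smul_smul]
    congr 1
    ring
  rw [harg, Matrix.exp_conj Hc _ hunit, Matrix.exp_diagonal]
  have hdexp : (NormedSpace.exp fun i => c * (Λ i : ℂ)) = fun i => (ε i : ℂ) := by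
    funext i
    rw [Pi.coe_exp, ← Complex.exp_eq_exp_ℂ]
    exact hexp i
  rw [hdexp, hinv]
  rw [Matrix.mul_smul, Matrix.smul_apply, Matrix.mul_apply]
  simp only [Matrix.mul_diagonal, Matrix.transpose_apply, hHc, Matrix.map_apply, smul_eq_mul]
  push_cast
  rw [Finset.mul_sum]

end AuxExp

theorem four_regular_hadamard_pst_order_le_sixteen (n : ℕ)
    (G : SimpleGraph (Fin n)) [DecidableRel G.Adj]
    (hconn : G.Connected)
    (hreg : ∀ v, G.degree v = 4)
    (H : Matrix (Fin n) (Fin n) ℝ)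
    (hent : ∀ i j, H i j = 1 ∨ H i j = -1)
    (hH : H * Hᵀ = (n : ℝ) • 1)
    (Λ : Fin n → ℝ)
    (hdiag : G.lapMatrix ℝ = ((n : ℝ))⁻¹ • (H * Matrix.diagonal Λ * Hᵀ))
    (j k : Fin n) (hjk : j ≠ k)
    (hpst : pstHalfPi (G.lapMatrix ℝ) j k) :
    n ≤ 16 := by
  classical
  have hnpos : 0 < n := by
    have : Nonempty (Fin n) := hconn.nonempty
    exact Fin.pos_iff_nonempty.mpr this
  have hn0 : (n:ℝ) ≠ 0 := by positivity
  set L : Matrix (Fin n) (Fin n) ℝ := G.lapMatrix ℝ with hLdef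
  set A : Matrix (Fin n) (Fin n) ℝ := G.adjMatrix ℝ with hAdef
  -- H is orthogonal on both sides
  have hHtH : Hᵀ * H = (n:ℝ) • 1 := by
    have h1 : H * ((n:ℝ)⁻¹ • Hᵀ) = 1 := by
      rw [Matrix.mul_smul, hH, smul_smul, inv_mul_cancel₀ hn0, one_smul]
    have h2 : ((n:ℝ)⁻¹ • Hᵀ) * H = 1 := mul_eq_one_comm.mp h1
    have h3 : (n:ℝ) • (((n:ℝ)⁻¹ • Hᵀ) * H) = (n:ℝ) • (1 : Matrix (Fin n) (Fin n) ℝ) := by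
      rw [h2]
    rw [Matrix.smul_mul, smul_smul, mul_inv_cancel₀ hn0, one_smul] at h3
    exact h3
  -- eigenvector relation
  have hLH : ∀ r i, ∑ l, L r l * H l i = Λ i * H r i := by
    intro r i
    have h1 : L * H = H * Matrix.diagonal Λ := by
      rw [hdiag, Matrix.smul_mul, Matrix.mul_assoc, Matrix.mul_assoc, hHtH]
      rw [Matrix.mul_smul, Matrix.mul_one, Matrix.mul_smul, smul_smul,
        inv_mul_cancel₀ hn0, one_smul]
    have h2 : (L * H) r i = (H * Matrix.diagonal Λ) r i := by rw [h1]
    rw [Matrix.mul_apply, Matrix.mul_diagonal] at h2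
    rw [h2]; ring
  have hsq : ∀ a b, H a b * H a b = 1 := by
    intro a b
    rcases hent a b with h | h <;> rw [h] <;> norm_num
  -- eigenvalues lie in {0,2,4,6,8}
  have hΛval : ∀ i, Λ i = 0 ∨ Λ i = 2 ∨ Λ i = 4 ∨ Λ i = 6 ∨ Λ i = 8 := by
    intro i
    have h1 := hLH j i
    have h2 : ∑ l, L j l * H l i = (L *ᵥ (fun l => H l i)) j := by
      simp [Matrix.mulVec, dotProduct]
    rw [h2, hLdef, SimpleGraph.lapMatrix_mulVec_apply, hreg j] at h1
    obtain ⟨m, hm, hS⟩ := pm_sum_card (s := G.neighborFinset j) (f := fun l => H l i)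
      (fun x _ => hent x i)
    rw [SimpleGraph.card_neighborFinset_eq_degree, hreg j] at hm hS
    rw [hS] at h1
    -- h1 : 4 * H j i - ((4:ℝ) - 2*m) = Λ i * H j i
    rcases hent j i with hji | hji <;> rw [hji] at h1 <;> interval_cases m <;>
      push_cast at h1 <;> [skip; skip; skip; skip; skip; skip; skip; skip; skip; skip] <;>
      first
        | (left; linarith)
        | (right; left; linarith)
        | (right; right; left; linarith)
        | (right; right; right; left; linarith)
        | (right; right; right; right; linarith)
  -- the sign function
  set ε : Fin n → ℝ := fun i => if Λ i = 2 ∨ Λ i = 6 then (-1 : ℝ) else 1 with hεdef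
  have hεpm : ∀ i, ε i = 1 ∨ ε i = -1 := by
    intro i
    by_cases h : Λ i = 2 ∨ Λ i = 6 <;> simp [hεdef, h]
  have hεexp : ∀ i, Complex.exp ((Complex.I * ((Real.pi/2 : ℝ):ℂ)) * (Λ i : ℂ)) = (ε i : ℂ) := by
    intro i
    have hpiI : Complex.exp ((Real.pi : ℂ) * Complex.I) = -1 := Complex.exp_pi_mul_I
    rcases hΛval i with h | h | h | h | h
    · have h2 : ((Λ i : ℝ) : ℂ) = 0 := by rw [h]; norm_num
      have h3 : ε i = 1 := by simp [hεdef, h]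
      rw [h2, h3, mul_zero, Complex.exp_zero]; norm_num
    · have h2 : ((Λ i : ℝ) : ℂ) = 2 := by rw [h]; norm_num
      have h3 : ε i = -1 := by simp [hεdef, h]
      rw [h2, h3, show Complex.I * ((Real.pi/2 : ℝ):ℂ) * (2:ℂ) = (Real.pi : ℂ) * Complex.I from by
        push_cast; ring, hpiI]
      norm_num
    · have h2 : ((Λ i : ℝ) : ℂ) = 4 := by rw [h]; norm_num
      have h3 : ε i = 1 := by simp [hεdef, h]
      rw [h2, h3, show Complex.I * ((Real.pi/2 : ℝ):ℂ) * (4:ℂ)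
          = (Real.pi : ℂ) * Complex.I + (Real.pi : ℂ) * Complex.I from by push_cast; ring,
        Complex.exp_add, hpiI]
      norm_num
    · have h2 : ((Λ i : ℝ) : ℂ) = 6 := by rw [h]; norm_num
      have h3 : ε i = -1 := by simp [hεdef, h]
      rw [h2, h3, show Complex.I * ((Real.pi/2 : ℝ):ℂ) * (6:ℂ)
          = (Real.pi : ℂ) * Complex.I + ((Real.pi : ℂ) * Complex.I + (Real.pi : ℂ) * Complex.I)
          from by push_cast; ring,
        Complex.exp_add, Complex.exp_add, hpiI]
      norm_num
    · have h2 : ((Λ i : ℝ) : ℂ) = 8 := by rw [h]; norm_num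
      have h3 : ε i = 1 := by simp [hεdef, h]
      rw [h2, h3, show Complex.I * ((Real.pi/2 : ℝ):ℂ) * (8:ℂ)
          = (Real.pi : ℂ) * Complex.I + ((Real.pi : ℂ) * Complex.I
            + ((Real.pi : ℂ) * Complex.I + (Real.pi : ℂ) * Complex.I)) from by push_cast; ring,
        Complex.exp_add, Complex.exp_add, Complex.exp_add, hpiI]
      norm_num
  -- PST forces the signed sum to have absolute value n
  have habs : |∑ i, H j i * ε i * H k i| = (n:ℝ) := by
    have he := exp_entry n hn0 H Λ ε hH hεexp L hdiag j k
    rw [pstHalfPi, he] at hpst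
    rw [norm_mul, norm_inv, Complex.norm_natCast, Complex.norm_real, Real.norm_eq_abs] at hpst
    field_simp at hpst
    linarith [abs_nonneg (∑ i, H j i * ε i * H k i), hpst]
  -- all products have the same sign
  set x : Fin n → ℝ := fun i => H j i * ε i * H k i with hxdef
  have hxpm : ∀ i, x i = 1 ∨ x i = -1 := by
    intro i
    rcases hent j i with h1 | h1 <;> rcases hent k i with h2 | h2 <;>
      rcases hεpm i with h3 | h3 <;> rw [hxdef] <;> norm_num [h1, h2, h3]
  have hS : (∑ i, x i = (n:ℝ)) ∨ (∑ i, x i = -(n:ℝ)) :=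
    (abs_eq (by positivity : (0:ℝ) ≤ (n:ℝ))).mp habs
  obtain ⟨s, hsall⟩ : ∃ s : ℝ, ∀ i, x i = s := by
    rcases hS with h | h
    · refine ⟨1, fun i => ?_⟩
      exact pm_sum_eq_card (fun y _ => hxpm y)
        (by rw [h, Finset.card_univ, Fintype.card_fin]) i (Finset.mem_univ i)
    · refine ⟨-1, fun i => ?_⟩
      have hneg : ∀ y ∈ (Finset.univ : Finset (Fin n)), -x y = 1 ∨ -x y = -1 := by
        intro y _
        rcases hxpm y with h1 | h1 <;> rw [h1] <;> norm_num
      have hsum : ∑ y, -x y = ((Finset.univ : Finset (Fin n)).card : ℝ) := by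
        rw [Finset.sum_neg_distrib, h, Finset.card_univ, Fintype.card_fin]; ring
      have := pm_sum_eq_card hneg hsum i (Finset.mem_univ i)
      linarith
  have horth : ∑ i, H j i * H k i = 0 := by
    have h2 : (H * Hᵀ) j k = (((n:ℝ) • 1 : Matrix (Fin n) (Fin n) ℝ)) j k := by rw [hH]
    simpa [Matrix.mul_apply, Matrix.transpose_apply, Matrix.one_apply, hjk] using h2
  have hsumε : ∑ i, ε i = 0 := by
    have hεi : ∀ i, ε i = s * (H j i * H k i) := by
      intro i
      have hx := hsall i
      simp only [hxdef] at hx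
      rcases hent j i with h1 | h1 <;> rcases hent k i with h2 | h2 <;>
        rw [h1, h2] at hx <;> rw [h1, h2] <;> nlinarith [hx]
    calc ∑ i, ε i = ∑ i, s * (H j i * H k i) := Finset.sum_congr rfl (fun i _ => hεi i)
      _ = s * ∑ i, H j i * H k i := by rw [Finset.mul_sum]
      _ = 0 := by rw [horth, mul_zero]
  -- trace identities
  have hdeg1 : G.degMatrix ℝ = (4:ℝ) • 1 := by
    ext a b
    by_cases hab : a = b <;>
      simp [SimpleGraph.degMatrix, Matrix.diagonal_apply, hab, hreg, Matrix.one_apply]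
  have hLsub : L = (4:ℝ) • 1 - A := by rw [hLdef, SimpleGraph.lapMatrix, hdeg1, hAdef]
  have htrA : Matrix.trace A = 0 := by rw [hAdef]; simp
  have htrA2 : Matrix.trace (A * A) = 4 * n := by
    have hd : ∀ i : Fin n, (A * A) i i = (4:ℝ) := by
      intro i
      rw [hAdef, SimpleGraph.adjMatrix_mul_self_apply_self, hreg]
      norm_num
    rw [Matrix.trace]
    simp only [Matrix.diag]
    rw [Finset.sum_congr rfl (fun i _ => hd i), Finset.sum_const, Finset.card_univ,
      Fintype.card_fin, nsmul_eq_mul]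
    ring
  have hA0 : ∀ a b, 0 ≤ A a b := by
    intro a b
    rw [hAdef, SimpleGraph.adjMatrix_apply]
    split <;> norm_num
  have htrA3 : 0 ≤ Matrix.trace (A * A * A) := by
    rw [Matrix.trace]
    apply Finset.sum_nonneg
    intro i _
    simp only [Matrix.diag]
    rw [Matrix.mul_apply]
    apply Finset.sum_nonneg
    intro l _
    apply mul_nonneg _ (hA0 l i)
    rw [Matrix.mul_apply]
    apply Finset.sum_nonneg
    intro y _
    exact mul_nonneg (hA0 i y) (hA0 y l)
  have hsum1 : ∑ i, Λ i = 4 * n := by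
    have t1 : Matrix.trace L = ∑ i, Λ i := by
      rw [hdiag]; exact trace_conj H _ hn0 hHtH Λ
    have t2 : Matrix.trace L = 4 * n := by
      rw [hLsub]
      simp [Matrix.trace_sub, Matrix.trace_smul, Matrix.trace_one, htrA]
    linarith
  have hexpand2 : L * L = (16:ℝ) • (1 : Matrix (Fin n) (Fin n) ℝ)
      - (4:ℝ) • A - (4:ℝ) • A + A * A := by
    rw [hLsub]
    simp only [sub_mul, mul_sub, Matrix.smul_mul, Matrix.mul_smul, Matrix.one_mul,
      Matrix.mul_one, smul_smul]
    module
  have hL2 : L * L = (n:ℝ)⁻¹ • (H * Matrix.diagonal (fun i => Λ i * Λ i) * Hᵀ) := by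
    rw [hdiag]; exact conj_mul_conj H _ hn0 hHtH Λ Λ
  have hsum2 : ∑ i, Λ i * Λ i = 20 * n := by
    have t1 : Matrix.trace (L * L) = ∑ i, Λ i * Λ i := by
      rw [hL2]; exact trace_conj H _ hn0 hHtH _
    have t2 : Matrix.trace (L * L) = 16 * n + Matrix.trace (A * A) := by
      rw [hexpand2]
      simp [Matrix.trace_add, Matrix.trace_sub, Matrix.trace_smul, Matrix.trace_one, htrA]
    rw [htrA2] at t2
    linarith
  have hL3 : L * L * L = (n:ℝ)⁻¹ • (H * Matrix.diagonal (fun i => Λ i * Λ i * Λ i) * Hᵀ) := by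
    rw [hL2, hdiag]; exact conj_mul_conj H _ hn0 hHtH _ Λ
  have hsum3 : ∑ i, Λ i * Λ i * Λ i ≤ 112 * n := by
    have t1 : Matrix.trace (L * L * L) = ∑ i, Λ i * Λ i * Λ i := by
      rw [hL3]; exact trace_conj H _ hn0 hHtH _
    have hexpand3 : L * L * L = (64:ℝ) • (1 : Matrix (Fin n) (Fin n) ℝ)
        - (48:ℝ) • A + (12:ℝ) • (A * A) - A * A * A := by
      rw [hexpand2, hLsub]
      simp only [sub_mul, add_mul, mul_sub, Matrix.smul_mul, Matrix.mul_smul, Matrix.one_mul,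
        Matrix.mul_one, smul_smul]
      module
    have t2 : Matrix.trace (L * L * L)
        = 64 * n + 12 * Matrix.trace (A * A) - Matrix.trace (A * A * A) := by
      rw [hexpand3]
      simp [Matrix.trace_sub, Matrix.trace_add, Matrix.trace_smul, Matrix.trace_one, htrA]
    rw [htrA2] at t2
    linarith
  -- at most one zero eigenvalue (connectivity)
  have hzero : ∀ i1 i2, Λ i1 = 0 → Λ i2 = 0 → i1 = i2 := by
    intro i1 i2 h1 h2
    by_contra hne
    have hker : ∀ (i : Fin n), Λ i = 0 → ∀ a b : Fin n, H a i = H b i := by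
      intro i hi a b
      have hmv : L *ᵥ (fun l => H l i) = 0 := by
        funext r
        have hr := hLH r i
        rw [hi, zero_mul] at hr
        show ∑ l, L r l * H l i = 0
        exact hr
      have hz : Matrix.toLin' (G.lapMatrix ℝ) (fun l => H l i) = 0 := by
        rw [Matrix.toLin'_apply, ← hLdef, hmv]
      exact (G.lapMatrix_mulVec_eq_zero_iff_forall_reachable (x := fun l => H l i)).mp hz a b
        (hconn.preconnected a b)
    have horth2 : ∑ l, H l i1 * H l i2 = 0 := by
      have h2' : (Hᵀ * H) i1 i2 = (((n:ℝ) • 1 : Matrix (Fin n) (Fin n) ℝ)) i1 i2 := by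
        rw [hHtH]
      simpa [Matrix.mul_apply, Matrix.transpose_apply, Matrix.one_apply, hne] using h2'
    have hconst : ∀ l, H l i1 * H l i2 = H j i1 * H j i2 := fun l => by
      rw [hker i1 h1 l j, hker i2 h2 l j]
    rw [Finset.sum_congr rfl (fun l _ => hconst l), Finset.sum_const, Finset.card_univ,
      Fintype.card_fin, nsmul_eq_mul] at horth2
    rcases hent j i1 with ha | ha <;> rcases hent j i2 with hb | hb <;>
      rw [ha, hb] at horth2 <;> norm_num at horth2 <;> exact hn0 (by exact_mod_cast horth2)
  have hind : ∑ i, (if Λ i = 0 then (1:ℝ) else 0) ≤ 1 := by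
    rw [Finset.sum_boole]
    have hc : (Finset.univ.filter (fun i => Λ i = 0)).card ≤ 1 := by
      apply Finset.card_le_one.mpr
      intro a ha b hb
      exact hzero a b (Finset.mem_filter.mp ha).2 (Finset.mem_filter.mp hb).2
    exact_mod_cast hc
  -- the linear programming certificate
  have hkey : ∀ i, (90:ℝ) ≤ Λ i * Λ i * Λ i - 15 * (Λ i * Λ i) + 68 * Λ i - 6 * ε i
      + 96 * (if Λ i = 0 then (1:ℝ) else 0) := by
    intro i
    rcases hΛval i with h | h | h | h | h <;> simp only [hεdef, h] <;> norm_num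
  have hsumkey : (∑ _i : Fin n, (90:ℝ))
      ≤ ∑ i, (Λ i * Λ i * Λ i - 15 * (Λ i * Λ i) + 68 * Λ i - 6 * ε i
        + 96 * (if Λ i = 0 then (1:ℝ) else 0)) :=
    Finset.sum_le_sum (fun i _ => hkey i)
  rw [Finset.sum_const, Finset.card_univ, Fintype.card_fin, nsmul_eq_mul] at hsumkey
  have hsplit : ∑ i, (Λ i * Λ i * Λ i - 15 * (Λ i * Λ i) + 68 * Λ i - 6 * ε i
        + 96 * (if Λ i = 0 then (1:ℝ) else 0))
      = (∑ i, Λ i * Λ i * Λ i) - 15 * (∑ i, Λ i * Λ i) + 68 * (∑ i, Λ i)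
        - 6 * (∑ i, ε i) + 96 * (∑ i, (if Λ i = 0 then (1:ℝ) else 0)) := by
    simp only [Finset.sum_add_distrib, Finset.sum_sub_distrib, ← Finset.mul_sum]
  rw [hsplit] at hsumkey
  have hfinal : (n:ℝ) ≤ 16 := by linarith
  exact_mod_cast hfinal
end
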